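/- arXiv:2004.03593 — 2 statements merged into one kernel-verified Lean document; each statement's English description precedes it below -/
import Mathlib

section
/- For convex, normal functions f, g : [0,1] → [0,1] and any x ∈ (0,1], the weak left envelope of the intersection f ⊓ g satisfies (f ⊓ g)^{Lw}(x) = max(f^{Lw}(x), g^{Lw}(x)). -/
/-!
Every competitor `min (f y) (g z)` in `(f ⊓ g)(t)` has `y = t` or `z = t`, so `(f ⊓ g)(t) ≤ max (f t) (g t)`,
which gives `≤`. Conversely, for `y < x` and `c < f y`, normality of `g` yields `z` with `c < g z`;
since `min y z < x`, the value `(f ⊓ g)(min y z) ≥ min (f y) (g z) > c` enters `(f ⊓ g)^{Lw}(x)`.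
-/

open Set Classical

noncomputable section

/-- Left envelope: `f^L(x) = sup {f y : 0 ≤ y ≤ x}`. -/
def fL (f : ℝ → ℝ) (x : ℝ) : ℝ := sSup (f '' Set.Icc 0 x)

/-- Weak left envelope: `f^{Lw}(x) = sup {f y : 0 ≤ y < x}` (for `x ∈ (0,1]`). -/
def fLw (f : ℝ → ℝ) (x : ℝ) : ℝ := sSup (f '' Set.Ico 0 x)

/-- Right envelope: `f^R(x) = sup {f y : x ≤ y ≤ 1}`. -/
def fR (f : ℝ → ℝ) (x : ℝ) : ℝ := sSup (f '' Set.Icc x 1)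

/-- `f` maps `[0,1]` into `[0,1]`. -/
def MapsI (f : ℝ → ℝ) : Prop := ∀ x ∈ Set.Icc (0:ℝ) 1, f x ∈ Set.Icc (0:ℝ) 1

/-- `f` is normal: `sup f = 1` on `[0,1]`. -/
def NormalFn (f : ℝ → ℝ) : Prop := sSup (f '' Set.Icc 0 1) = 1

/-- `f` is convex: `f y ≥ min (f x) (f z)` whenever `0 ≤ x ≤ y ≤ z ≤ 1`. -/
def ConvexFn (f : ℝ → ℝ) : Prop :=
  ∀ x y z : ℝ, 0 ≤ x → x ≤ y → y ≤ z → z ≤ 1 → min (f x) (f z) ≤ f y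

/-- Convolution intersection: `(f ⊓ g)(x) = sup {min (f y) (g z) : min y z = x}`. -/
def inter (f g : ℝ → ℝ) (x : ℝ) : ℝ :=
  sSup {v | ∃ y ∈ Set.Icc (0:ℝ) 1, ∃ z ∈ Set.Icc (0:ℝ) 1, min y z = x ∧ v = min (f y) (g z)}

/-- Convolution union: `(f ⊔ g)(x) = sup {min (f y) (g z) : max y z = x}`. -/
def union (f g : ℝ → ℝ) (x : ℝ) : ℝ :=
  sSup {v | ∃ y ∈ Set.Icc (0:ℝ) 1, ∃ z ∈ Set.Icc (0:ℝ) 1, max y z = x ∧ v = min (f y) (g z)}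

/-- `L₁(f) = inf {x ∈ [0,1] : f^L(x) = 1}`. -/
def L1 (f : ℝ → ℝ) : ℝ := sInf {x ∈ Set.Icc (0:ℝ) 1 | fL f x = 1}

/-- `R¹(f) = sup {x ∈ [0,1] : f^R(x) = 1}`. -/
def R1 (f : ℝ → ℝ) : ℝ := sSup {x ∈ Set.Icc (0:ℝ) 1 | fR f x = 1}

/-- The characteristic function `1_{{1}}`. -/
def ind1 : ℝ → ℝ := fun x => if x = 1 then 1 else 0

/-- The modified intersection `f ⋆ g`. -/
def star (f g : ℝ → ℝ) : ℝ → ℝ :=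
  if Set.EqOn f ind1 (Set.Icc (0:ℝ) 1) then g
  else if Set.EqOn g ind1 (Set.Icc (0:ℝ) 1) then f
  else if min (f 1) (g 1) = 1 then inter f g
  else fun x => if x = 1 then 0 else inter f g x

lemma MapsI.bddAbove_image {f : ℝ → ℝ} (hf : MapsI f) {s : Set ℝ} (hs : s ⊆ Icc 0 1) :
    BddAbove (f '' s) :=
  ⟨1, by rintro _ ⟨y, hy, rfl⟩; exact (hf y (hs hy)).2⟩

lemma Ico_subset_unitInterval {x : ℝ} (hx1 : x ≤ 1) : Ico 0 x ⊆ Icc (0 : ℝ) 1 :=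
  Ico_subset_Icc_self.trans (Icc_subset_Icc_right hx1)

lemma inter_symm (f g : ℝ → ℝ) : inter f g = inter g f := by
  funext t
  unfold inter
  congr 1
  ext v
  constructor <;>
  · rintro ⟨y, hy, z, hz, hmin, rfl⟩
    exact ⟨z, hz, y, hy, min_comm z y ▸ hmin, min_comm _ _⟩

lemma inter_competitor_le_one {f : ℝ → ℝ} (hf : MapsI f) (g : ℝ → ℝ) (t : ℝ) :
    ∀ v ∈ {v | ∃ y ∈ Icc (0:ℝ) 1, ∃ z ∈ Icc (0:ℝ) 1, min y z = t ∧ v = min (f y) (g z)},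
      v ≤ 1 := by
  rintro v ⟨y, hy, z, -, -, rfl⟩
  exact (min_le_left _ _).trans (hf y hy).2

lemma min_le_inter {f : ℝ → ℝ} (hf : MapsI f) (g : ℝ → ℝ) {y z : ℝ}
    (hy : y ∈ Icc (0:ℝ) 1) (hz : z ∈ Icc (0:ℝ) 1) : min (f y) (g z) ≤ inter f g (min y z) :=
  le_csSup ⟨1, inter_competitor_le_one hf g _⟩ ⟨y, hy, z, hz, rfl, rfl⟩

lemma inter_le_one {f : ℝ → ℝ} (hf : MapsI f) (g : ℝ → ℝ) {t : ℝ} (ht : t ∈ Icc (0:ℝ) 1) :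
    inter f g t ≤ 1 :=
  csSup_le ⟨_, t, ht, t, ht, min_self t, rfl⟩ (inter_competitor_le_one hf g t)

lemma inter_le_max (f g : ℝ → ℝ) {t : ℝ} (ht : t ∈ Icc (0:ℝ) 1) :
    inter f g t ≤ max (f t) (g t) := by
  refine csSup_le ⟨_, t, ht, t, ht, min_self t, rfl⟩ ?_
  rintro v ⟨y, -, z, -, hmin, rfl⟩
  rcases le_total y z with hyz | hzy
  · rw [min_eq_left hyz] at hmin
    exact hmin ▸ (min_le_left _ _).trans (le_max_left _ _)
  · rw [min_eq_right hzy] at hmin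
    exact hmin ▸ (min_le_right _ _).trans (le_max_right _ _)

lemma fLw_le_fLw_inter {f g : ℝ → ℝ} (hf : MapsI f) (hgn : NormalFn g)
    {x : ℝ} (hx0 : 0 < x) (hx1 : x ≤ 1) : fLw f x ≤ fLw (inter f g) x := by
  have hsub := Ico_subset_unitInterval hx1
  have hbdd : BddAbove (inter f g '' Ico 0 x) :=
    ⟨1, by rintro _ ⟨t, ht, rfl⟩; exact inter_le_one hf g (hsub ht)⟩
  refine csSup_le ((nonempty_Ico.2 hx0).image f) ?_
  rintro _ ⟨y, hy, rfl⟩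
  refine le_of_forall_lt fun c hc => ?_
  have hc1 : c < sSup (g '' Icc 0 1) := by
    rw [hgn]
    exact hc.trans_le (hf y (hsub hy)).2
  obtain ⟨_, ⟨z, hz, rfl⟩, hcz⟩ :=
    exists_lt_of_lt_csSup ((nonempty_Icc.2 zero_le_one).image g) hc1
  have hmin : min y z ∈ Ico 0 x := ⟨le_min hy.1 hz.1, (min_le_left _ _).trans_lt hy.2⟩
  calc c < min (f y) (g z) := lt_min hc hcz
    _ ≤ inter f g (min y z) := min_le_inter hf g (hsub hy) hz
    _ ≤ fLw (inter f g) x := le_csSup hbdd ⟨_, hmin, rfl⟩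

lemma fLw_inter_le_max {f g : ℝ → ℝ} (hf : MapsI f) (hg : MapsI g)
    {x : ℝ} (hx0 : 0 < x) (hx1 : x ≤ 1) : fLw (inter f g) x ≤ max (fLw f x) (fLw g x) := by
  have hsub := Ico_subset_unitInterval hx1
  refine csSup_le ((nonempty_Ico.2 hx0).image _) ?_
  rintro _ ⟨t, ht, rfl⟩
  exact (inter_le_max f g (hsub ht)).trans <| max_le_max
    (le_csSup (hf.bddAbove_image hsub) ⟨t, ht, rfl⟩)
    (le_csSup (hg.bddAbove_image hsub) ⟨t, ht, rfl⟩)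

theorem stmt_1_general (f g : ℝ → ℝ) (hf : MapsI f) (hg : MapsI g)
    (hfn : NormalFn f) (hgn : NormalFn g)
    (x : ℝ) (hx : x ∈ Set.Ioc (0:ℝ) 1) :
    fLw (inter f g) x = max (fLw f x) (fLw g x) := by
  obtain ⟨hx0, hx1⟩ := hx
  refine le_antisymm (fLw_inter_le_max hf hg hx0 hx1) (max_le ?_ ?_)
  · exact fLw_le_fLw_inter hf hgn hx0 hx1
  · rw [inter_symm]
    exact fLw_le_fLw_inter hg hfn hx0 hx1

/-- `(f ⊓ g)^{Lw}(x) = max (f^{Lw}(x)) (g^{Lw}(x))`. -/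
theorem stmt_1 (f g : ℝ → ℝ) (hf : MapsI f) (hg : MapsI g)
    (hfn : NormalFn f) (hfc : ConvexFn f) (hgn : NormalFn g) (hgc : ConvexFn g)
    (x : ℝ) (hx : x ∈ Set.Ioc (0:ℝ) 1) :
    fLw (inter f g) x = max (fLw f x) (fLw g x) :=
  stmt_1_general f g hf hg hfn hgn x hx
end
end

section
/- The operation ⋆ distributes over the convolution union: f ⋆ (g ⊔ h) = (f ⋆ g) ⊔ (f ⋆ h) for all normal, convex f, g, h : [0,1] → [0,1]. -/
open Set Classical

noncomputable section

/-!
Away from the point `1`, `⋆` is the convolution intersection `⊓`, and `⊓` distributes over `⊔`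
as soon as `f` is convex: a pair `(min y z, min y' w)` realising a value of `(f ⊓ g) ⊔ (f ⊓ h)`
at `x` can be traded for the single point `Y = max x (min y y')`, which lies between `y` and `y'`
(so `f Y ≥ min (f y) (f y')`) and satisfies `min Y (max z w) = x`. At the point `1` both sides
are computed from normality: `(g ⊔ h)(1) = max (g 1) (h 1)`, and `f ⋆ k` is again normal.
When `g` or `h` is `1_{1}` the identity reduces to the absorption law `f ⊔ (f ⋆ h) = f`.
-/

lemma min_csSup_le {S : Set ℝ} {a B : ℝ} (hS : S.Nonempty) (h : ∀ s ∈ S, min a s ≤ B) :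
    min a (sSup S) ≤ B := by
  by_cases ha : a ≤ B
  · exact (min_le_left _ _).trans ha
  · exact (min_le_right _ _).trans
      (csSup_le hS fun s hs => (min_le_iff.1 (h s hs)).resolve_left ha)

lemma ConvexFn.min_le_apply {f : ℝ → ℝ} (hf : ConvexFn f) {a b c : ℝ} (ha : a ∈ Icc (0:ℝ) 1)
    (hc : c ∈ Icc (0:ℝ) 1) (hab : min a c ≤ b) (hbc : b ≤ max a c) :
    min (f a) (f c) ≤ f b := by
  rcases le_total a c with h | h
  · rw [min_eq_left h] at hab
    rw [max_eq_right h] at hbc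
    exact hf a b c ha.1 hab hbc hc.2
  · rw [min_eq_right h] at hab
    rw [max_eq_left h] at hbc
    rw [min_comm]
    exact hf c b a hc.1 hab hbc ha.2

section Convolution

variable {f g h : ℝ → ℝ} {x a B : ℝ}

lemma le_union (hf : MapsI f) {y z : ℝ} (hy : y ∈ Icc (0:ℝ) 1) (hz : z ∈ Icc (0:ℝ) 1)
    (hyz : max y z = x) : min (f y) (g z) ≤ union f g x :=
  le_csSup ⟨1, by rintro _ ⟨y, hy, z, -, -, rfl⟩; exact (min_le_left _ _).trans (hf y hy).2⟩
    ⟨y, hy, z, hz, hyz, rfl⟩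

lemma le_inter (hf : MapsI f) {y z : ℝ} (hy : y ∈ Icc (0:ℝ) 1) (hz : z ∈ Icc (0:ℝ) 1)
    (hyz : min y z = x) : min (f y) (g z) ≤ inter f g x :=
  le_csSup ⟨1, by rintro _ ⟨y, hy, z, -, -, rfl⟩; exact (min_le_left _ _).trans (hf y hy).2⟩
    ⟨y, hy, z, hz, hyz, rfl⟩

lemma union_le (hx : x ∈ Icc (0:ℝ) 1)
    (hB : ∀ y ∈ Icc (0:ℝ) 1, ∀ z ∈ Icc (0:ℝ) 1, max y z = x → min (f y) (g z) ≤ B) :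
    union f g x ≤ B :=
  csSup_le ⟨_, x, hx, x, hx, max_self x, rfl⟩ fun _ ⟨y, hy, z, hz, hyz, hv⟩ => hv ▸ hB y hy z hz hyz

lemma inter_le (hx : x ∈ Icc (0:ℝ) 1)
    (hB : ∀ y ∈ Icc (0:ℝ) 1, ∀ z ∈ Icc (0:ℝ) 1, min y z = x → min (f y) (g z) ≤ B) :
    inter f g x ≤ B :=
  csSup_le ⟨_, x, hx, x, hx, min_self x, rfl⟩ fun _ ⟨y, hy, z, hz, hyz, hv⟩ => hv ▸ hB y hy z hz hyz

lemma min_union_le (hx : x ∈ Icc (0:ℝ) 1)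
    (hB : ∀ y ∈ Icc (0:ℝ) 1, ∀ z ∈ Icc (0:ℝ) 1, max y z = x → min a (min (f y) (g z)) ≤ B) :
    min a (union f g x) ≤ B :=
  min_csSup_le ⟨_, x, hx, x, hx, max_self x, rfl⟩
    fun _ ⟨y, hy, z, hz, hyz, hv⟩ => hv ▸ hB y hy z hz hyz

lemma min_inter_le (hx : x ∈ Icc (0:ℝ) 1)
    (hB : ∀ y ∈ Icc (0:ℝ) 1, ∀ z ∈ Icc (0:ℝ) 1, min y z = x → min a (min (f y) (g z)) ≤ B) :
    min a (inter f g x) ≤ B :=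
  min_csSup_le ⟨_, x, hx, x, hx, min_self x, rfl⟩
    fun _ ⟨y, hy, z, hz, hyz, hv⟩ => hv ▸ hB y hy z hz hyz

lemma mapsI_union (hf : MapsI f) (hg : MapsI g) : MapsI (union f g) := fun x hx =>
  ⟨(le_min (hf x hx).1 (hg x hx).1).trans (le_union hf hx hx (max_self x)),
    union_le hx fun y hy _ _ _ => (min_le_left _ _).trans (hf y hy).2⟩

lemma mapsI_inter (hf : MapsI f) (hg : MapsI g) : MapsI (inter f g) := fun x hx =>
  ⟨(le_min (hf x hx).1 (hg x hx).1).trans (le_inter hf hx hx (min_self x)),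
    inter_le hx fun y hy _ _ _ => (min_le_left _ _).trans (hf y hy).2⟩

lemma union_swap (f g : ℝ → ℝ) : union f g = union g f := by
  funext x
  unfold union
  congr 1
  ext v
  constructor <;>
    rintro ⟨y, hy, z, hz, hyz, rfl⟩ <;> exact ⟨z, hz, y, hy, by rwa [max_comm], min_comm _ _⟩

lemma union_apply_congr {f' g' : ℝ → ℝ} (hf : EqOn f f' (Icc 0 x)) (hg : EqOn g g' (Icc 0 x)) :
    union f g x = union f' g' x := by
  have key : ∀ y ∈ Icc (0:ℝ) 1, ∀ z ∈ Icc (0:ℝ) 1, max y z = x →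
      min (f y) (g z) = min (f' y) (g' z) := fun y hy z hz hyz => by
    rw [hf ⟨hy.1, hyz ▸ le_max_left y z⟩, hg ⟨hz.1, hyz ▸ le_max_right y z⟩]
  unfold union
  congr 1
  ext v
  constructor
  · rintro ⟨y, hy, z, hz, hyz, rfl⟩
    exact ⟨y, hy, z, hz, hyz, key y hy z hz hyz⟩
  · rintro ⟨y, hy, z, hz, hyz, rfl⟩
    exact ⟨y, hy, z, hz, hyz, (key y hy z hz hyz).symm⟩

lemma union_self (hf : MapsI f) : EqOn (union f f) f (Icc 0 1) := by
  intro x hx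
  refine le_antisymm (union_le hx fun y _ z _ hyz => ?_) ?_
  · rcases max_choice y z with e | e <;> rw [e] at hyz <;> subst hyz
    exacts [min_le_left _ _, min_le_right _ _]
  · simpa only [min_self] using le_union (g := f) hf hx hx (max_self x)

lemma union_apply_one_le (f g : ℝ → ℝ) : union f g 1 ≤ max (f 1) (g 1) := by
  refine union_le (right_mem_Icc.2 zero_le_one) fun y _ z _ hyz => ?_
  rcases max_choice y z with e | e <;> rw [e] at hyz <;> subst hyz
  exacts [(min_le_left _ _).trans (le_max_left _ _), (min_le_right _ _).trans (le_max_right _ _)]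

lemma inter_apply_one (f g : ℝ → ℝ) : inter f g 1 = min (f 1) (g 1) := by
  have h1 : (1:ℝ) ∈ Icc 0 1 := right_mem_Icc.2 zero_le_one
  have : {v | ∃ y ∈ Icc (0:ℝ) 1, ∃ z ∈ Icc (0:ℝ) 1, min y z = 1 ∧ v = min (f y) (g z)} =
      {min (f 1) (g 1)} := by
    ext v
    constructor
    · rintro ⟨y, hy, z, hz, hyz, rfl⟩
      obtain rfl : y = 1 := le_antisymm hy.2 (hyz ▸ min_le_left y z)
      obtain rfl : z = 1 := le_antisymm hz.2 (hyz ▸ min_le_right _ z)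
      rfl
    · rintro rfl
      exact ⟨1, h1, 1, h1, min_self 1, rfl⟩
  rw [inter, this, csSup_singleton]

lemma inter_union_distrib (hf : MapsI f) (hg : MapsI g) (hfc : ConvexFn f)
    (hx : x ∈ Icc (0:ℝ) 1) : inter f (union g h) x = union (inter f g) (inter f h) x := by
  refine le_antisymm (inter_le hx fun y hy u hu hyu => ?_) (union_le hx fun p hp q hq hpq => ?_)
  · refine min_union_le hu fun z hz w hw hzw => ?_
    calc min (f y) (min (g z) (h w))
        ≤ min (inter f g (min y z)) (inter f h (min y w)) :=
          le_min ((min_le_min_left _ (min_le_left _ _)).trans (le_inter hf hy hz rfl))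
            ((min_le_min_left _ (min_le_right _ _)).trans (le_inter hf hy hw rfl))
      _ ≤ union (inter f g) (inter f h) x :=
          le_union (mapsI_inter hf hg) ⟨le_min hy.1 hz.1, (min_le_left _ _).trans hy.2⟩
            ⟨le_min hy.1 hw.1, (min_le_left _ _).trans hy.2⟩
            (by rw [← min_max_distrib_left, hzw, hyu])
  · refine min_inter_le hq fun y' hy' w hw hyw => ?_
    rw [min_comm]
    refine min_inter_le hp fun y hy z hz hyz => ?_
    subst hyz hyw
    set Y := max x (min y y')
    have hxY : x ≤ max y y' := hpq ▸ max_le_max (min_le_left _ _) (min_le_left _ _)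
    have hYmem : Y ∈ Icc (0:ℝ) 1 :=
      ⟨le_max_of_le_right (le_min hy.1 hy'.1), max_le (hxY.trans (max_le hy.2 hy'.2))
        ((min_le_left _ _).trans hy.2)⟩
    -- either `min y y' ≤ x`, or `y, y' > x` forces `z, w ≤ x` and hence `max z w = x`
    have hY : min Y (max z w) = x := by
      subst hpq
      simp only [Y, min_def, max_def]
      split_ifs <;> linarith
    have hfY : min (f y) (f y') ≤ f Y :=
      hfc.min_le_apply hy hy' (le_max_right _ _) (max_le hxY min_le_max)
    calc min (min (f y') (h w)) (min (f y) (g z))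
        ≤ min (f Y) (min (g z) (h w)) := by
          refine le_min (le_trans ?_ hfY) ?_ <;>
            simp only [le_min_iff, min_le_iff, le_refl, true_or, or_true, and_self]
      _ ≤ min (f Y) (union g h (max z w)) := min_le_min_left _ (le_union hg hz hw rfl)
      _ ≤ inter f (union g h) x :=
          le_inter hf hYmem ⟨le_max_of_le_left hz.1, max_le hz.2 hw.2⟩ hY

lemma min_inter_le_of_le (hfc : ConvexFn f) (hx : x ∈ Icc (0:ℝ) 1) {y : ℝ} (hy : 0 ≤ y)
    (hyx : y ≤ x) : min (f y) (inter f h x) ≤ f x := by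
  refine min_inter_le hx fun Y hY Z _ hYZ => ?_
  rcases min_choice Y Z with e | e <;> rw [e] at hYZ <;> subst hYZ
  · exact (min_le_right _ _).trans (min_le_left _ _)
  · exact (min_le_min_left _ (min_le_left _ _)).trans
      (hfc y Z Y hy hyx (min_eq_right_iff.1 e) hY.2)

end Convolution

section Normal

variable {k : ℝ → ℝ}

lemma NormalFn.le_of_forall_min_le (hk : NormalFn k) {a B : ℝ} (ha : a ≤ 1)
    (h : ∀ z ∈ Icc (0:ℝ) 1, min a (k z) ≤ B) : a ≤ B := by
  have := min_csSup_le ((nonempty_Icc.2 zero_le_one).image k) (a := a)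
    (by rintro _ ⟨z, hz, rfl⟩; exact h z hz)
  rwa [hk, min_eq_left ha] at this

lemma NormalFn.one_le_of_forall_lt_one (hk : NormalFn k) (hk1 : k 1 < 1) {B : ℝ}
    (h : ∀ z ∈ Ico (0:ℝ) 1, k z ≤ B) : 1 ≤ B := by
  have : 1 ≤ max B (k 1) := hk.le_of_forall_min_le le_rfl fun z hz => by
    refine (min_le_right _ _).trans ?_
    rcases hz.2.lt_or_eq with hz1 | rfl
    · exact le_max_of_le_left (h z ⟨hz.1, hz1⟩)
    · exact le_max_right _ _
  exact (le_max_iff.1 this).resolve_right hk1.not_ge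

lemma exists_pos_of_not_eqOn_ind1 (hk : MapsI k) (hkn : NormalFn k)
    (hk' : ¬ EqOn k ind1 (Icc 0 1)) : ∃ b ∈ Ico (0:ℝ) 1, 0 < k b := by
  by_contra! hzero
  refine hk' fun x hx => ?_
  rcases hx.2.lt_or_eq with hx1 | rfl
  · rw [ind1, if_neg hx1.ne]
    exact le_antisymm (hzero x ⟨hx.1, hx1⟩) (hk x hx).1
  · have hk1 : 1 ≤ k 1 := by
      by_contra! hk1
      exact zero_lt_one.not_ge (hkn.one_le_of_forall_lt_one hk1 hzero)
    rw [ind1, if_pos rfl]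
    exact le_antisymm (hk 1 hx).2 hk1

end Normal

section Union

variable {g h : ℝ → ℝ}

lemma not_eqOn_ind1_union (hg : MapsI g) (hh : MapsI h) (hgn : NormalFn g) (hhn : NormalFn h)
    (hg' : ¬ EqOn g ind1 (Icc 0 1)) (hh' : ¬ EqOn h ind1 (Icc 0 1)) :
    ¬ EqOn (union g h) ind1 (Icc 0 1) := by
  obtain ⟨b, hb, hgb⟩ := exists_pos_of_not_eqOn_ind1 hg hgn hg'
  obtain ⟨c, hc, hhc⟩ := exists_pos_of_not_eqOn_ind1 hh hhn hh'
  intro hU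
  have hbc : max b c < 1 := max_lt hb.2 hc.2
  have := le_union (g := h) hg (Ico_subset_Icc_self hb) (Ico_subset_Icc_self hc) rfl
  rw [hU ⟨le_max_of_le_left hb.1, hbc.le⟩, ind1, if_neg hbc.ne] at this
  exact (lt_min hgb hhc).not_ge this

lemma eqOn_ind1_union_of_left (hg' : EqOn g ind1 (Icc 0 1)) (hg : MapsI g) (hh : MapsI h)
    (hhn : NormalFn h) : EqOn (union g h) ind1 (Icc 0 1) := by
  intro x hx
  rcases hx.2.lt_or_eq with hx1 | rfl
  · rw [ind1, if_neg hx1.ne]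
    refine le_antisymm (union_le hx fun y hy z _ hyz => ?_) (mapsI_union hg hh x hx).1
    have hy1 : y < 1 := (hyz ▸ le_max_left y z).trans_lt hx1
    rw [hg' hy, ind1, if_neg hy1.ne]
    exact min_le_left _ _
  · have hg1 : g 1 = 1 := by rw [hg' hx, ind1, if_pos rfl]
    rw [ind1, if_pos rfl]
    refine le_antisymm (mapsI_union hg hh 1 hx).2 (hhn.le_of_forall_min_le le_rfl fun z hz => ?_)
    simpa only [hg1] using le_union hg hx hz (max_eq_left hz.2)

lemma union_apply_one (hg : MapsI g) (hh : MapsI h) (hgn : NormalFn g) (hhn : NormalFn h) :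
    union g h 1 = max (g 1) (h 1) := by
  have h1 : (1:ℝ) ∈ Icc 0 1 := right_mem_Icc.2 zero_le_one
  refine le_antisymm (union_apply_one_le g h) (max_le ?_ ?_)
  · exact hhn.le_of_forall_min_le (hg 1 h1).2 fun z hz => le_union hg h1 hz (max_eq_left hz.2)
  · rw [union_swap]
    exact hgn.le_of_forall_min_le (hh 1 h1).2 fun y hy => le_union hh h1 hy (max_eq_left hy.2)

end Union

section Star

variable {f g h : ℝ → ℝ} {x : ℝ}

lemma star_of_left (hf' : EqOn f ind1 (Icc 0 1)) (g : ℝ → ℝ) : star f g = g := if_pos hf'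

lemma star_of_right (hf' : ¬ EqOn f ind1 (Icc 0 1)) (hg' : EqOn g ind1 (Icc 0 1)) :
    star f g = f := by
  rw [_root_.star, if_neg hf', if_pos hg']

lemma star_apply_of_ne_one (hf' : ¬ EqOn f ind1 (Icc 0 1)) (hg' : ¬ EqOn g ind1 (Icc 0 1))
    (hx : x ≠ 1) : star f g x = inter f g x := by
  rw [_root_.star, if_neg hf', if_neg hg']
  split_ifs
  · rfl
  · exact if_neg hx

lemma star_apply_one (hf' : ¬ EqOn f ind1 (Icc 0 1)) (hg' : ¬ EqOn g ind1 (Icc 0 1)) :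
    star f g 1 = if min (f 1) (g 1) = 1 then 1 else 0 := by
  rw [_root_.star, if_neg hf', if_neg hg']
  split_ifs with h
  · rw [inter_apply_one, h]
  · exact if_pos rfl

lemma mapsI_star (hf : MapsI f) (hg : MapsI g) : MapsI (star f g) := by
  by_cases hf' : EqOn f ind1 (Icc 0 1)
  · rwa [star_of_left hf']
  by_cases hg' : EqOn g ind1 (Icc 0 1)
  · rwa [star_of_right hf' hg']
  intro x hx
  rcases eq_or_ne x 1 with rfl | hx1
  · rw [star_apply_one hf' hg']
    split_ifs <;> norm_num
  · rw [star_apply_of_ne_one hf' hg' hx1]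
    exact mapsI_inter hf hg x hx

lemma star_le_inter (hf : MapsI f) (hg : MapsI g) (hf' : ¬ EqOn f ind1 (Icc 0 1))
    (hg' : ¬ EqOn g ind1 (Icc 0 1)) : star f g x ≤ inter f g x := by
  rcases eq_or_ne x 1 with rfl | hx1
  · have h1 : (1:ℝ) ∈ Icc 0 1 := right_mem_Icc.2 zero_le_one
    rw [star_apply_one hf' hg', inter_apply_one]
    split_ifs with h
    · exact h.ge
    · exact le_min (hf 1 h1).1 (hg 1 h1).1
  · exact (star_apply_of_ne_one hf' hg' hx1).le

lemma normalFn_star (hf : MapsI f) (hg : MapsI g) (hfn : NormalFn f) (hgn : NormalFn g) :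
    NormalFn (star f g) := by
  by_cases hf' : EqOn f ind1 (Icc 0 1)
  · rwa [star_of_left hf']
  by_cases hg' : EqOn g ind1 (Icc 0 1)
  · rwa [star_of_right hf' hg']
  have h1 : (1:ℝ) ∈ Icc 0 1 := right_mem_Icc.2 zero_le_one
  have hne : (star f g '' Icc 0 1).Nonempty := (nonempty_Icc.2 zero_le_one).image _
  have hle : ∀ v ∈ star f g '' Icc 0 1, v ≤ 1 := by
    rintro _ ⟨x, hx, rfl⟩
    exact (mapsI_star hf hg x hx).2
  refine le_antisymm (csSup_le hne hle) ?_
  set M := sSup (star f g '' Icc 0 1)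
  have hM : ∀ x ∈ Icc (0:ℝ) 1, star f g x ≤ M := fun x hx =>
    le_csSup ⟨1, hle⟩ (mem_image_of_mem _ hx)
  have hinter : ∀ y ∈ Icc (0:ℝ) 1, ∀ z ∈ Icc (0:ℝ) 1, min y z < 1 → min (f y) (g z) ≤ M :=
    fun y hy z hz hyz => by
      refine (le_inter hf hy hz rfl).trans ?_
      rw [← star_apply_of_ne_one hf' hg' hyz.ne]
      exact hM _ ⟨le_min hy.1 hz.1, hyz.le⟩
  by_cases hfg : min (f 1) (g 1) = 1
  · simpa only [star_apply_one hf' hg', hfg, if_pos] using hM 1 h1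
  rcases min_lt_iff.1 (((min_le_left _ _).trans (hf 1 h1).2).lt_of_ne hfg) with hf1 | hg1
  · exact hfn.one_le_of_forall_lt_one hf1 fun y hy =>
      hgn.le_of_forall_min_le (hf y (Ico_subset_Icc_self hy)).2 fun z hz =>
        hinter y (Ico_subset_Icc_self hy) z hz ((min_le_left _ _).trans_lt hy.2)
  · exact hgn.one_le_of_forall_lt_one hg1 fun z hz =>
      hfn.le_of_forall_min_le (hg z (Ico_subset_Icc_self hz)).2 fun y hy => by
        rw [min_comm]
        exact hinter y hy z (Ico_subset_Icc_self hz) ((min_le_right _ _).trans_lt hz.2)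

lemma union_star_eq_self (hf : MapsI f) (hh : MapsI h) (hfn : NormalFn f) (hhn : NormalFn h)
    (hfc : ConvexFn f) (hf' : ¬ EqOn f ind1 (Icc 0 1)) :
    EqOn (union f (star f h)) f (Icc 0 1) := by
  by_cases hh' : EqOn h ind1 (Icc 0 1)
  · rw [star_of_right hf' hh']
    exact union_self hf
  intro x hx
  refine le_antisymm (union_le hx fun y hy z hz hyz => ?_) ?_
  · rcases max_choice y z with e | e <;> rw [e] at hyz <;> subst hyz
    · exact min_le_left _ _
    · exact (min_le_min_left _ (star_le_inter hf hh hf' hh')).trans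
        (min_inter_le_of_le hfc hz hy.1 (e ▸ le_max_left y z))
  rcases hx.2.lt_or_eq with hx1 | rfl
  · refine hhn.le_of_forall_min_le (hf x hx).2 fun z hz => ?_
    have hxz : min x z < 1 := (min_le_left _ _).trans_lt hx1
    calc min (f x) (h z) ≤ min (f x) (star f h (min x z)) := by
          rw [star_apply_of_ne_one hf' hh' hxz.ne]
          exact le_min (min_le_left _ _) (le_inter hf hx hz rfl)
      _ ≤ union f (star f h) x :=
          le_union hf hx ⟨le_min hx.1 hz.1, hxz.le⟩ (max_eq_left (min_le_left _ _))
  · exact (normalFn_star hf hh hfn hhn).le_of_forall_min_le (hf 1 hx).2 fun z hz =>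
      le_union hf hx hz (max_eq_left hz.2)

lemma union_star_apply_one_of_min_eq_one (hf : MapsI f) (hg : MapsI g) (hh : MapsI h)
    (hfn : NormalFn f) (hhn : NormalFn h) (hf' : ¬ EqOn f ind1 (Icc 0 1))
    (hg' : ¬ EqOn g ind1 (Icc 0 1)) (hfg : min (f 1) (g 1) = 1) :
    union (star f g) (star f h) 1 = 1 := by
  have h1 : (1:ℝ) ∈ Icc 0 1 := right_mem_Icc.2 zero_le_one
  have hfg1 : star f g 1 = 1 := by rw [star_apply_one hf' hg', if_pos hfg]
  refine le_antisymm (mapsI_union (mapsI_star hf hg) (mapsI_star hf hh) 1 h1).2 ?_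
  refine (normalFn_star hf hh hfn hhn).le_of_forall_min_le le_rfl fun z hz => ?_
  simpa only [hfg1] using le_union (mapsI_star hf hg) h1 hz (max_eq_left hz.2)

lemma star_union_apply_one (hf : MapsI f) (hg : MapsI g) (hh : MapsI h) (hfn : NormalFn f)
    (hgn : NormalFn g) (hhn : NormalFn h) (hf' : ¬ EqOn f ind1 (Icc 0 1))
    (hg' : ¬ EqOn g ind1 (Icc 0 1)) (hh' : ¬ EqOn h ind1 (Icc 0 1)) :
    star f (union g h) 1 = union (star f g) (star f h) 1 := by
  have h1 : (1:ℝ) ∈ Icc 0 1 := right_mem_Icc.2 zero_le_one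
  rw [star_apply_one hf' (not_eqOn_ind1_union hg hh hgn hhn hg' hh'),
    union_apply_one hg hh hgn hhn]
  split_ifs with hA
  · rcases max_choice (g 1) (h 1) with e | e <;> rw [e] at hA
    · exact (union_star_apply_one_of_min_eq_one hf hg hh hfn hhn hf' hg' hA).symm
    · rw [union_swap]
      exact (union_star_apply_one_of_min_eq_one hf hh hg hfn hgn hf' hh' hA).symm
  · have hf1 := (hf 1 h1).2
    have hfg : min (f 1) (g 1) ≠ 1 := fun e => hA (le_antisymm ((min_le_left _ _).trans hf1)
      (e.ge.trans (min_le_min_left _ (le_max_left _ _))))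
    have hfh : min (f 1) (h 1) ≠ 1 := fun e => hA (le_antisymm ((min_le_left _ _).trans hf1)
      (e.ge.trans (min_le_min_left _ (le_max_right _ _))))
    refine le_antisymm (mapsI_union (mapsI_star hf hg) (mapsI_star hf hh) 1 h1).1
      ((union_apply_one_le _ _).trans ?_)
    rw [star_apply_one hf' hg', star_apply_one hf' hh', if_neg hfg, if_neg hfh, max_self]

end Star

theorem stmt_18_general (f g h : ℝ → ℝ) (hf : MapsI f) (hg : MapsI g) (hh : MapsI h)
    (hfn : NormalFn f) (hfc : ConvexFn f) (hgn : NormalFn g) (hhn : NormalFn h) :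
    Set.EqOn (star f (union g h)) (union (star f g) (star f h)) (Set.Icc (0:ℝ) 1) := by
  by_cases hf' : EqOn f ind1 (Icc 0 1)
  · simp only [star_of_left hf']
    exact eqOn_refl _ _
  by_cases hg' : EqOn g ind1 (Icc 0 1)
  · rw [star_of_right hf' (eqOn_ind1_union_of_left hg' hg hh hhn), star_of_right hf' hg']
    exact (union_star_eq_self hf hh hfn hhn hfc hf').symm
  by_cases hh' : EqOn h ind1 (Icc 0 1)
  · rw [union_swap g, union_swap (star f g),
      star_of_right hf' (eqOn_ind1_union_of_left hh' hh hg hgn), star_of_right hf' hh']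
    exact (union_star_eq_self hf hg hfn hgn hfc hf').symm
  intro x hx
  rcases hx.2.lt_or_eq with hx1 | rfl
  · have hstar : ∀ {k}, ¬ EqOn k ind1 (Icc 0 1) → EqOn (inter f k) (star f k) (Icc 0 x) :=
      fun hk' z hz => (star_apply_of_ne_one hf' hk' (hz.2.trans_lt hx1).ne).symm
    rw [star_apply_of_ne_one hf' (not_eqOn_ind1_union hg hh hgn hhn hg' hh') hx1.ne,
      inter_union_distrib hf hg hfc hx]
    exact union_apply_congr (hstar hg') (hstar hh')
  · exact star_union_apply_one hf hg hh hfn hgn hhn hf' hg' hh'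

/-- `⋆` distributes over the convolution union `⊔`. -/
theorem stmt_18 (f g h : ℝ → ℝ) (hf : MapsI f) (hg : MapsI g) (hh : MapsI h)
    (hfn : NormalFn f) (hfc : ConvexFn f) (hgn : NormalFn g) (hgc : ConvexFn g)
    (hhn : NormalFn h) (hhc : ConvexFn h) :
    Set.EqOn (star f (union g h)) (union (star f g) (star f h)) (Set.Icc (0:ℝ) 1) :=
  stmt_18_general f g h hf hg hh hfn hfc hgn hhn
end
end
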